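/- arXiv:2510.09455 — 8 statements merged into one kernel-verified Lean document; each statement's English description precedes it below -/
import Mathlib

section
/- Let (A, g) be an interior algebra and let A* be the Boolean subalgebra of A generated by the open elements of A. Suppose p : A → A is a homomorphism of interior algebras (from (A,g) to itself) such that p x ∈ A* for every x ∈ A and p x = x for every x ∈ A* (i.e., p is a retraction of A onto A*). Then A* = A, i.e., every element of A lies in A*. -/
/-- `g` is an interior operator on the Boolean algebra `B`. -/
def IsInteriorOp {B : Type*} [BooleanAlgebra B] (g : B → B) : Prop :=
  (∀ x, g x ≤ x) ∧ (∀ x, g (g x) = g x) ∧ (∀ x y, g (x ⊓ y) = g x ⊓ g y) ∧ g ⊤ = ⊤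

/-- Membership in the Boolean subalgebra generated by `S`. -/
inductive BoolGen {B : Type*} [BooleanAlgebra B] (S : Set B) : B → Prop
  | base : ∀ x, x ∈ S → BoolGen S x
  | bot : BoolGen S ⊥
  | top : BoolGen S ⊤
  | inf : ∀ x y, BoolGen S x → BoolGen S y → BoolGen S (x ⊓ y)
  | sup : ∀ x y, BoolGen S x → BoolGen S y → BoolGen S (x ⊔ y)
  | compl : ∀ x, BoolGen S x → BoolGen S xᶜ

/-- `h` is a homomorphism of interior algebras from `(A, gA)` to `(B, gB)`. -/
def IsIAHom {A B : Type*} [BooleanAlgebra A] [BooleanAlgebra B]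
    (gA : A → A) (gB : B → B) (h : A → B) : Prop :=
  (∀ x y, h (x ⊓ y) = h x ⊓ h y) ∧ (∀ x y, h (x ⊔ y) = h x ⊔ h y) ∧
  (∀ x, h xᶜ = (h x)ᶜ) ∧ h ⊥ = ⊥ ∧ h ⊤ = ⊤ ∧ (∀ x, h (gA x) = gB (h x))

/-- If a homomorphism of interior algebras `p : A → A` is a retraction of `A` onto the
Boolean subalgebra `A*` generated by the open elements, then `A* = A`. -/
theorem star_retract_implies_star_algebra {A : Type*} [BooleanAlgebra A]
    (g : A → A) (hg : IsInteriorOp g) (p : A → A) (hp : IsIAHom g g p)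
    (hrange : ∀ x : A, BoolGen {y : A | g y = y} (p x))
    (hfix : ∀ x : A, BoolGen {y : A | g y = y} x → p x = x) :
    ∀ x : A, BoolGen {y : A | g y = y} x := by
  obtain ⟨hle, hidem, hginf, hgtop⟩ := hg
  obtain ⟨pinf, psup, pcompl, pbot, ptop, pg⟩ := hp
  intro x
  set y := p x with hy
  have hyA : BoolGen {y : A | g y = y} y := hrange x
  have hpy : p y = y := hfix y hyA
  set v := (x ⊓ y) ⊔ (xᶜ ⊓ yᶜ) with hv
  have hpv : p v = ⊤ := by
    rw [hv, psup, pinf, pinf, pcompl, pcompl, ← hy, hpy, inf_idem, inf_idem,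
      sup_compl_eq_top]
  have hgvopen : g (g v) = g v := hidem v
  have hgv : g v = ⊤ := by
    have h1 : p (g v) = g v := hfix (g v) (BoolGen.base _ hgvopen)
    rw [pg, hpv, hgtop] at h1
    exact h1.symm
  have hvtop : v = ⊤ := le_antisymm le_top (hgv ▸ hle v)
  have hxy : x = y := by
    have hx1 : x ⊓ (xᶜ ⊓ yᶜ) = ⊥ := by rw [← inf_assoc, inf_compl_eq_bot, bot_inf_eq]
    have hy1 : y ⊓ (x ⊓ y) = x ⊓ y := by rw [inf_comm x y, ← inf_assoc, inf_idem]
    have hy2 : y ⊓ (xᶜ ⊓ yᶜ) = ⊥ := by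
      rw [inf_comm xᶜ yᶜ, ← inf_assoc, inf_compl_eq_bot, bot_inf_eq]
    have h1 : x ≤ y := by
      have h3 : x ⊓ v = x ⊓ y := by
        rw [hv, inf_sup_left, hx1, sup_bot_eq, ← inf_assoc, inf_idem]
      rw [hvtop, inf_top_eq] at h3
      exact h3.le.trans inf_le_right
    have h2 : y ≤ x := by
      have h3 : y ⊓ v = x ⊓ y := by
        rw [hv, inf_sup_left, hy1, hy2, sup_bot_eq]
      rw [hvtop, inf_top_eq] at h3
      exact h3.le.trans inf_le_left
    exact le_antisymm h1 h2
  rw [hxy]; exact hyA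
end

section
/- Let B be a Boolean algebra and g an interior operator on B. For all open elements a and b of B, the element a ⇒ b := g(aᶜ ⊔ b) is open, and it is the relative pseudocomplement of a with respect to b among open elements: for every open c, c ⊓ a ≤ b if and only if c ≤ g(aᶜ ⊔ b). Hence the open elements of an interior algebra form a Heyting algebra with implication a ⇒ b = g(aᶜ ⊔ b). -/
/-- For open `a, b`, the element `g (aᶜ ⊔ b)` is open and is the relative
pseudocomplement of `a` with respect to `b` among the open elements. -/
theorem opens_heyting_implication {B : Type*} [BooleanAlgebra B]
    (g : B → B) (hg : IsInteriorOp g) :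
    ∀ a b : B, g a = a → g b = b →
      g (g (aᶜ ⊔ b)) = g (aᶜ ⊔ b) ∧
      ∀ c : B, g c = c → (c ⊓ a ≤ b ↔ c ≤ g (aᶜ ⊔ b)) := by
  obtain ⟨hle, hidem, hinf, -⟩ := hg
  have mono : ∀ x y : B, x ≤ y → g x ≤ g y := by
    intro x y hxy
    have : g (x ⊓ y) = g x ⊓ g y := hinf x y
    rw [inf_eq_left.mpr hxy] at this
    exact this ▸ inf_le_right
  intro a b ha hb
  refine ⟨hidem _, fun c hc => ⟨fun h => ?_, fun h => ?_⟩⟩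
  · have hc' : c ≤ aᶜ ⊔ b := by
      rw [sup_comm, ← himp_eq]
      exact le_himp_iff.mpr h
    exact hc ▸ mono _ _ hc'
  · have h1 : c ≤ aᶜ ⊔ b := h.trans (hle _)
    have h2 := inf_le_inf_right a h1
    rw [inf_sup_right, compl_inf_self, bot_sup_eq] at h2
    exact h2.trans inf_le_left
end

section
/- Let P be a preorder and let M and N be dense antichains of P (μ-sets). Then M and N have the same cardinality, i.e., there is a bijection between M and N. -/
/-- Any two dense antichains (μ-sets) of a preorder have the same cardinality. -/
theorem mu_sets_equinumerous {P : Type*} [Preorder P] (M N : Set P)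
    (hM : IsAntichain (· ≤ ·) M) (hN : IsAntichain (· ≤ ·) N)
    (hMdense : ∀ x : P, ∃ m ∈ M, x ≤ m) (hNdense : ∀ x : P, ∃ n ∈ N, x ≤ n) :
    Nonempty (M ≃ N) := by
  choose f hfN hf using fun m : M => hNdense m
  choose g hgM hg using fun n : N => hMdense n
  refine ⟨{
    toFun := fun m => ⟨f m, hfN m⟩
    invFun := fun n => ⟨g n, hgM n⟩
    left_inv := ?_
    right_inv := ?_ }⟩
  · intro m
    have hle : (m : P) ≤ g ⟨f m, hfN m⟩ := le_trans (hf m) (hg ⟨f m, hfN m⟩)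
    ext
    by_contra hne
    exact hM m.2 (hgM ⟨f m, hfN m⟩) (fun h => hne h.symm) hle
  · intro n
    have hle : (n : P) ≤ f ⟨g n, hgM n⟩ := le_trans (hg n) (hf ⟨g n, hgM n⟩)
    ext
    by_contra hne
    exact hN n.2 (hfN ⟨g n, hgM n⟩) (fun h => hne h.symm) hle
end

section
/- Let B be a Boolean algebra and L a subset of B containing ⊥ and ⊤ and closed under ⊓ and ⊔ (a bounded sublattice of B). Then an element x of B belongs to the Boolean subalgebra of B generated by L if and only if x is a finite meet of elements of the form uᶜ ⊔ v with u, v ∈ L (the empty meet being ⊤). -/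
section

variable {B : Type*} [BooleanAlgebra B]

def implMeet (l : List (B × B)) : B :=
  (l.map fun p => p.1ᶜ ⊔ p.2).foldr (· ⊓ ·) ⊤

def implMeets (L : Set B) : Set B :=
  {x | ∃ l : List (B × B), (∀ p ∈ l, p.1 ∈ L ∧ p.2 ∈ L) ∧ x = implMeet l}

@[simp]
lemma implMeet_nil : implMeet ([] : List (B × B)) = ⊤ := rfl

@[simp]
lemma implMeet_cons (p : B × B) (l : List (B × B)) :
    implMeet (p :: l) = (p.1ᶜ ⊔ p.2) ⊓ implMeet l := rfl

lemma implMeet_append (l m : List (B × B)) :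
    implMeet (l ++ m) = implMeet l ⊓ implMeet m := by
  induction l with
  | nil => simp
  | cons p l ih => simp [ih, inf_assoc]

lemma compl_sup_sup_implMeet (u v : B) (m : List (B × B)) :
    (uᶜ ⊔ v) ⊔ implMeet m = implMeet (m.map fun q => (u ⊓ q.1, v ⊔ q.2)) := by
  induction m with
  | nil => simp
  | cons q m ih =>
    have hjoin : (u ⊓ q.1)ᶜ ⊔ (v ⊔ q.2) = (uᶜ ⊔ v) ⊔ (q.1ᶜ ⊔ q.2) := by
      rw [compl_inf]
      ac_rfl
    rw [List.map_cons, implMeet_cons, implMeet_cons, ← ih, hjoin, sup_inf_left]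

namespace implMeets

variable {L : Set B}

lemma top_mem : (⊤ : B) ∈ implMeets L := ⟨[], by simp, rfl⟩

lemma inf_mem {x y : B} (hx : x ∈ implMeets L) (hy : y ∈ implMeets L) :
    x ⊓ y ∈ implMeets L := by
  obtain ⟨l, hl, rfl⟩ := hx
  obtain ⟨m, hm, rfl⟩ := hy
  refine ⟨l ++ m, fun p hp => ?_, (implMeet_append l m).symm⟩
  rcases List.mem_append.1 hp with hp | hp
  exacts [hl p hp, hm p hp]

lemma compl_sup_mem {u v : B} (hu : u ∈ L) (hv : v ∈ L) : uᶜ ⊔ v ∈ implMeets L :=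
  ⟨[(u, v)], by simp [hu, hv], by simp⟩

lemma mem_of_mem (htop : ⊤ ∈ L) {v : B} (hv : v ∈ L) : v ∈ implMeets L := by
  simpa using compl_sup_mem htop hv

lemma sup_mem (hinf : ∀ u ∈ L, ∀ v ∈ L, u ⊓ v ∈ L) (hsup : ∀ u ∈ L, ∀ v ∈ L, u ⊔ v ∈ L)
    {x y : B} (hx : x ∈ implMeets L) (hy : y ∈ implMeets L) : x ⊔ y ∈ implMeets L := by
  obtain ⟨l, hl, rfl⟩ := hx
  induction l with
  | nil => simpa using top_mem
  | cons p l ih =>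
    obtain ⟨hp₁, hp₂⟩ := hl p List.mem_cons_self
    have hhead : (p.1ᶜ ⊔ p.2) ⊔ y ∈ implMeets L := by
      obtain ⟨m, hm, rfl⟩ := hy
      refine ⟨_, fun q hq => ?_, compl_sup_sup_implMeet p.1 p.2 m⟩
      obtain ⟨r, hr, rfl⟩ := List.mem_map.1 hq
      exact ⟨hinf _ hp₁ _ (hm r hr).1, hsup _ hp₂ _ (hm r hr).2⟩
    have htail := ih fun q hq => hl q (List.mem_cons_of_mem _ hq)
    rw [implMeet_cons, sup_inf_right]
    exact inf_mem hhead htail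

lemma compl_mem (hbot : ⊥ ∈ L) (htop : ⊤ ∈ L) (hinf : ∀ u ∈ L, ∀ v ∈ L, u ⊓ v ∈ L)
    (hsup : ∀ u ∈ L, ∀ v ∈ L, u ⊔ v ∈ L) {x : B} (hx : x ∈ implMeets L) :
    xᶜ ∈ implMeets L := by
  obtain ⟨l, hl, rfl⟩ := hx
  induction l with
  | nil => simpa using compl_sup_mem htop hbot
  | cons p l ih =>
    obtain ⟨hp₁, hp₂⟩ := hl p List.mem_cons_self
    have hhead : p.1 ⊓ p.2ᶜ ∈ implMeets L :=
      inf_mem (mem_of_mem htop hp₁) (by simpa using compl_sup_mem hp₂ hbot)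
    have htail := ih fun q hq => hl q (List.mem_cons_of_mem _ hq)
    rw [implMeet_cons, compl_inf, compl_sup, compl_compl]
    exact sup_mem hinf hsup hhead htail

lemma boolGen_of_mem {x : B} (hx : x ∈ implMeets L) : BoolGen L x := by
  obtain ⟨l, hl, rfl⟩ := hx
  induction l with
  | nil => exact BoolGen.top
  | cons p l ih =>
    obtain ⟨hp₁, hp₂⟩ := hl p List.mem_cons_self
    exact .inf _ _ (.sup _ _ (.compl _ (.base _ hp₁)) (.base _ hp₂))
      (ih fun q hq => hl q (List.mem_cons_of_mem _ hq))

end implMeets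

end

/-- The Boolean subalgebra generated by a bounded sublattice `L` consists exactly of the
finite meets of elements `uᶜ ⊔ v` with `u, v ∈ L` (the empty meet being `⊤`). -/
theorem boolGen_of_sublattice_iff {B : Type*} [BooleanAlgebra B] (L : Set B)
    (hbot : ⊥ ∈ L) (htop : ⊤ ∈ L)
    (hinf : ∀ u ∈ L, ∀ v ∈ L, u ⊓ v ∈ L) (hsup : ∀ u ∈ L, ∀ v ∈ L, u ⊔ v ∈ L) :
    ∀ x : B, BoolGen L x ↔
      ∃ l : List (B × B), (∀ p ∈ l, p.1 ∈ L ∧ p.2 ∈ L) ∧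
        x = (l.map fun p => p.1ᶜ ⊔ p.2).foldr (· ⊓ ·) ⊤ := by
  intro x
  refine ⟨fun hx => ?_, implMeets.boolGen_of_mem⟩
  change x ∈ implMeets L
  induction hx with
  | base x hx => exact implMeets.mem_of_mem htop hx
  | bot => exact implMeets.mem_of_mem htop hbot
  | top => exact implMeets.top_mem
  | inf _ _ _ _ hx hy => exact implMeets.inf_mem hx hy
  | sup _ _ _ _ hx hy => exact implMeets.sup_mem hinf hsup hx hy
  | compl _ _ hx => exact implMeets.compl_mem hbot htop hinf hsup hx
end

section
/- Let B be a Boolean algebra and L a subset of B containing ⊥ and ⊤, closed under ⊓ and ⊔, which generates B as a Boolean algebra, and such that L is a Heyting algebra in itself: for all u, v ∈ L there exists w ∈ L such that for every c ∈ L, c ⊓ u ≤ v if and only if c ≤ w. Then there exists an interior operator g on B whose set of open elements is exactly L: g x ≤ x, g (g x) = g x, g (x ⊓ y) = g x ⊓ g y, g ⊤ = ⊤ for all x, y ∈ B, and {x : B | g x = x} = L. (This is the existence part of Blok's Theorem I.2.13: the Boolean extension of a Heyting algebra carries a canonical interior operator.) -/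
/-- Finite meets of elements of the form `aᶜ ⊔ b` with `a, b ∈ L`. -/
inductive MeetBasic {B : Type*} [BooleanAlgebra B] (L : Set B) : B → Prop
  | basic (a b : B) (ha : a ∈ L) (hb : b ∈ L) : MeetBasic L (aᶜ ⊔ b)
  | inf (x y : B) : MeetBasic L x → MeetBasic L y → MeetBasic L (x ⊓ y)

lemma meetBasic_sup {B : Type*} [BooleanAlgebra B] {L : Set B}
    (hinf : ∀ u ∈ L, ∀ v ∈ L, u ⊓ v ∈ L) (hsup : ∀ u ∈ L, ∀ v ∈ L, u ⊔ v ∈ L)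
    {x : B} (hx : MeetBasic L x) : ∀ y, MeetBasic L y → MeetBasic L (x ⊔ y) := by
  induction hx with
  | basic a b ha hb =>
    intro y hy
    induction hy with
    | basic c d hc hd =>
      have h : (aᶜ ⊔ b) ⊔ (cᶜ ⊔ d) = (a ⊓ c)ᶜ ⊔ (b ⊔ d) := by
        rw [compl_inf, sup_sup_sup_comm]
      rw [h]
      exact .basic _ _ (hinf a ha c hc) (hsup b hb d hd)
    | inf u v hu hv ihu ihv =>
      rw [sup_inf_left]
      exact .inf _ _ ihu ihv
  | inf u v hu hv ihu ihv =>
    intro y hy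
    rw [sup_inf_right]
    exact .inf _ _ (ihu y hy) (ihv y hy)

lemma meetBasic_compl {B : Type*} [BooleanAlgebra B] {L : Set B}
    (hbot : ⊥ ∈ L) (htop : ⊤ ∈ L)
    (hinf : ∀ u ∈ L, ∀ v ∈ L, u ⊓ v ∈ L) (hsup : ∀ u ∈ L, ∀ v ∈ L, u ⊔ v ∈ L)
    {x : B} (hx : MeetBasic L x) : MeetBasic L xᶜ := by
  induction hx with
  | basic a b ha hb =>
    have h : (aᶜ ⊔ b)ᶜ = (⊤ᶜ ⊔ a) ⊓ (bᶜ ⊔ ⊥) := by simp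
    rw [h]
    exact .inf _ _ (.basic ⊤ a htop ha) (.basic b ⊥ hb hbot)
  | inf u v hu hv ihu ihv =>
    rw [compl_inf]
    exact meetBasic_sup hinf hsup ihu _ ihv

lemma boolGen_meetBasic {B : Type*} [BooleanAlgebra B] {L : Set B}
    (hbot : ⊥ ∈ L) (htop : ⊤ ∈ L)
    (hinf : ∀ u ∈ L, ∀ v ∈ L, u ⊓ v ∈ L) (hsup : ∀ u ∈ L, ∀ v ∈ L, u ⊔ v ∈ L)
    {x : B} (hx : BoolGen L x) : MeetBasic L x := by
  induction hx with
  | base x hxL =>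
    have h : x = ⊤ᶜ ⊔ x := by simp
    rw [h]; exact .basic ⊤ x htop hxL
  | bot =>
    have h : (⊥ : B) = ⊤ᶜ ⊔ ⊥ := by simp
    rw [h]; exact .basic ⊤ ⊥ htop hbot
  | top =>
    have h : (⊤ : B) = ⊥ᶜ ⊔ ⊥ := by simp
    rw [h]; exact .basic ⊥ ⊥ hbot hbot
  | inf u v hu hv ihu ihv => exact .inf _ _ ihu ihv
  | sup u v hu hv ihu ihv => exact meetBasic_sup hinf hsup ihu _ ihv
  | compl u hu ihu => exact meetBasic_compl hbot htop hinf hsup ihu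

/-- Existence part of Blok's Theorem I.2.13: if a generating bounded sublattice `L` of a
Boolean algebra is a Heyting algebra in itself, then there is an interior operator on
`B` whose open elements are exactly `L`. -/
theorem exists_interiorOp_with_opens {B : Type*} [BooleanAlgebra B] (L : Set B)
    (hbot : ⊥ ∈ L) (htop : ⊤ ∈ L)
    (hinf : ∀ u ∈ L, ∀ v ∈ L, u ⊓ v ∈ L) (hsup : ∀ u ∈ L, ∀ v ∈ L, u ⊔ v ∈ L)
    (hgen : ∀ x : B, BoolGen L x)
    (hheyting : ∀ u ∈ L, ∀ v ∈ L, ∃ w ∈ L, ∀ c ∈ L, (c ⊓ u ≤ v ↔ c ≤ w)) :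
    ∃ g : B → B, (∀ x, g x ≤ x) ∧ (∀ x, g (g x) = g x) ∧
      (∀ x y, g (x ⊓ y) = g x ⊓ g y) ∧ g ⊤ = ⊤ ∧ {x : B | g x = x} = L := by
  classical
  -- every element has a greatest element of `L` below it
  have key : ∀ x : B, ∃ w, w ∈ L ∧ w ≤ x ∧ ∀ c ∈ L, c ≤ x → c ≤ w := by
    intro x
    have hmb := boolGen_meetBasic hbot htop hinf hsup (hgen x)
    induction hmb with
    | basic a b ha hb =>
      obtain ⟨w, hwL, hw⟩ := hheyting a ha b hb
      have hiff : ∀ c : B, c ≤ aᶜ ⊔ b ↔ c ⊓ a ≤ b := by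
        intro c; rw [sup_comm, ← himp_eq, le_himp_iff]
      refine ⟨w, hwL, ?_, ?_⟩
      · exact (hiff w).mpr ((hw w hwL).mpr le_rfl)
      · intro c hcL hc
        exact (hw c hcL).mp ((hiff c).mp hc)
    | inf u v hu hv ihu ihv =>
      obtain ⟨w₁, hw₁L, hw₁le, hw₁max⟩ := ihu
      obtain ⟨w₂, hw₂L, hw₂le, hw₂max⟩ := ihv
      refine ⟨w₁ ⊓ w₂, hinf w₁ hw₁L w₂ hw₂L, inf_le_inf hw₁le hw₂le, ?_⟩
      intro c hcL hc
      exact le_inf (hw₁max c hcL (hc.trans inf_le_left))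
        (hw₂max c hcL (hc.trans inf_le_right))
  choose g hgL hgle hgmax using key
  have hopen : ∀ x ∈ L, g x = x := by
    intro x hxL
    exact le_antisymm (hgle x) (hgmax x x hxL le_rfl)
  refine ⟨g, hgle, fun x => hopen _ (hgL x), ?_, hopen ⊤ htop, ?_⟩
  · intro x y
    apply le_antisymm
    · exact le_inf (hgmax x _ (hgL _) ((hgle _).trans inf_le_left))
        (hgmax y _ (hgL _) ((hgle _).trans inf_le_right))
    · exact hgmax (x ⊓ y) _ (hinf _ (hgL x) _ (hgL y))
        (inf_le_inf (hgle x) (hgle y))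
  · ext x
    constructor
    · intro hx
      simp only [Set.mem_setOf_eq] at hx
      exact hx ▸ hgL x
    · exact hopen x
end

section
/- Let L be a bounded distributive lattice and let e₁ : L → B₁ and e₂ : L → B₂ be injective bounded lattice homomorphisms into Boolean algebras B₁ and B₂ such that the image of e₁ generates B₁ as a Boolean algebra and the image of e₂ generates B₂ as a Boolean algebra. Then there is an isomorphism of Boolean algebras φ : B₁ ≅ B₂ with φ (e₁ x) = e₂ x for all x ∈ L. (Uniqueness of the free Boolean extension: any Boolean algebra generated by an embedded copy of L is isomorphic to Fr(L) by an isomorphism over L.) -/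
set_option linter.unusedSectionVars false

namespace FBEU

lemma inf_compl_le_iff {B : Type*} [BooleanAlgebra B] {x y z : B} :
    x ⊓ yᶜ ≤ z ↔ x ≤ y ⊔ z := by
  rw [← sdiff_eq]; exact sdiff_le_iff

variable {L B : Type*} [DistribLattice L] [BoundedOrder L] [BooleanAlgebra B]

/-- Evaluation of a "normal form" finset of pairs: join of `e a ⊓ (e b)ᶜ`. -/
def nfEval (e : L → B) (s : Finset (L × L)) : B :=
  s.sup fun p => e p.1 ⊓ (e p.2)ᶜ

variable {e : L → B}

section Emb
variable (he : Function.Injective e)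
  (hinf : ∀ x y, e (x ⊓ y) = e x ⊓ e y) (hsup : ∀ x y, e (x ⊔ y) = e x ⊔ e y)
  (hbot : e ⊥ = ⊥) (htop : e ⊤ = ⊤)

include he hinf in
omit [BoundedOrder L] in
lemma e_le_iff {x y : L} : e x ≤ e y ↔ x ≤ y := by
  constructor
  · intro h
    have h2 : e (x ⊓ y) = e x := by rw [hinf]; exact inf_eq_left.mpr h
    exact inf_eq_left.mp (he h2)
  · intro h
    have h2 : e (x ⊓ y) = e x := congrArg e (inf_eq_left.mpr h)
    rw [hinf] at h2
    exact inf_eq_left.mp h2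

include he hinf hsup in
lemma single_le [DecidableEq (L × L)] (a b : L) (t : Finset (L × L)) :
    e a ⊓ (e b)ᶜ ≤ nfEval e t ↔
      ∀ u ⊆ t, a ⊓ u.inf Prod.snd ≤ b ⊔ (t \ u).sup Prod.fst := by
  induction t using Finset.induction generalizing a b with
  | empty =>
    have hev : nfEval e (∅ : Finset (L × L)) = ⊥ := Finset.sup_empty
    rw [hev, inf_compl_le_iff, sup_bot_eq, e_le_iff he hinf]
    constructor
    · intro h u hu
      have hu' : u = ∅ := Finset.subset_empty.mp hu
      subst hu'
      simpa using h
    · intro h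
      have h0 := h ∅ (Finset.empty_subset _)
      simpa using h0
  | @insert p t hp ih =>
    have hL : (e a ⊓ (e b)ᶜ ≤ nfEval e (insert p t)) ↔
        (e a ⊓ (e (b ⊔ p.1))ᶜ ≤ nfEval e t ∧ e (a ⊓ p.2) ⊓ (e b)ᶜ ≤ nfEval e t) := by
      have h1 : nfEval e (insert p t) = (e p.1 ⊓ (e p.2)ᶜ) ⊔ nfEval e t :=
        Finset.sup_insert
      have h2 : e a ⊓ (e b)ᶜ ⊓ (e p.1 ⊓ (e p.2)ᶜ)ᶜ =
          (e a ⊓ (e (b ⊔ p.1))ᶜ) ⊔ (e (a ⊓ p.2) ⊓ (e b)ᶜ) := by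
        rw [hsup, hinf, compl_inf, compl_compl, compl_sup, inf_sup_left]
        congr 1
        · rw [inf_assoc]
        · rw [inf_right_comm]
      constructor
      · intro h
        have h3 : e a ⊓ (e b)ᶜ ⊓ (e p.1 ⊓ (e p.2)ᶜ)ᶜ ≤ nfEval e t := by
          rw [inf_compl_le_iff, ← h1]; exact h
        rw [h2, sup_le_iff] at h3
        exact h3
      · intro h
        have h3 : e a ⊓ (e b)ᶜ ⊓ (e p.1 ⊓ (e p.2)ᶜ)ᶜ ≤ nfEval e t := by
          rw [h2, sup_le_iff]; exact h
        rw [inf_compl_le_iff, ← h1] at h3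
        exact h3
    rw [hL, ih, ih]
    constructor
    · rintro ⟨hA, hB⟩ u hu
      by_cases hpu : p ∈ u
      · have hv : u.erase p ⊆ t := by
          intro x hx
          have hx1 := Finset.mem_erase.mp hx
          rcases Finset.mem_insert.mp (hu hx1.2) with h | h
          · exact absurd h hx1.1
          · exact h
        have hu' : u = insert p (u.erase p) := (Finset.insert_erase hpu).symm
        have hdiff : insert p t \ u = t \ u.erase p := by
          ext x
          simp only [Finset.mem_sdiff, Finset.mem_insert, Finset.mem_erase]
          constructor
          · rintro ⟨h1 | h1, h2⟩
            · exact absurd (h1 ▸ hpu) h2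
            · exact ⟨h1, fun h3 => h2 h3.2⟩
          · rintro ⟨h1, h2⟩
            exact ⟨Or.inr h1, fun hxu => h2 ⟨fun hxp => hp (hxp ▸ h1), hxu⟩⟩
        have hinfu : u.inf Prod.snd = p.2 ⊓ (u.erase p).inf Prod.snd := by
          conv_lhs => rw [hu']
          exact Finset.inf_insert
        rw [hdiff, hinfu, ← inf_assoc]
        exact hB _ hv
      · have hu'' : u ⊆ t := by
          intro x hx
          rcases Finset.mem_insert.mp (hu hx) with h | h
          · exact absurd (h ▸ hx) hpu
          · exact h
        have hdiff : insert p t \ u = insert p (t \ u) := by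
          ext x
          simp only [Finset.mem_sdiff, Finset.mem_insert]
          constructor
          · rintro ⟨h1 | h1, h2⟩
            · exact Or.inl h1
            · exact Or.inr ⟨h1, h2⟩
          · rintro (h1 | ⟨h1, h2⟩)
            · exact ⟨Or.inl h1, h1 ▸ hpu⟩
            · exact ⟨Or.inr h1, h2⟩
        rw [hdiff, Finset.sup_insert, ← sup_assoc]
        exact hA u hu''
    · intro H
      constructor
      · intro u hu
        have h0 := H u (hu.trans (Finset.subset_insert p t))
        have hpu : p ∉ u := fun h => hp (hu h)
        have hdiff : insert p t \ u = insert p (t \ u) := by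
          ext x
          simp only [Finset.mem_sdiff, Finset.mem_insert]
          constructor
          · rintro ⟨h1 | h1, h2⟩
            · exact Or.inl h1
            · exact Or.inr ⟨h1, h2⟩
          · rintro (h1 | ⟨h1, h2⟩)
            · exact ⟨Or.inl h1, h1 ▸ hpu⟩
            · exact ⟨Or.inr h1, h2⟩
        rw [hdiff, Finset.sup_insert, ← sup_assoc] at h0
        exact h0
      · intro u hu
        have h0 := H (insert p u) (Finset.insert_subset_insert p hu)
        have hdiff : insert p t \ insert p u = t \ u := by
          ext x
          simp only [Finset.mem_sdiff, Finset.mem_insert, not_or]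
          constructor
          · rintro ⟨h1 | h1, h2, h3⟩
            · exact absurd h1 h2
            · exact ⟨h1, h3⟩
          · rintro ⟨h1, h2⟩
            exact ⟨Or.inr h1, fun hxp => hp (hxp ▸ h1), h2⟩
        rw [hdiff, Finset.inf_insert, ← inf_assoc] at h0
        exact h0

include he hinf hsup in
lemma nfEval_le_iff [DecidableEq (L × L)] (s t : Finset (L × L)) :
    nfEval e s ≤ nfEval e t ↔
      ∀ p ∈ s, ∀ u ⊆ t, p.1 ⊓ u.inf Prod.snd ≤ p.2 ⊔ (t \ u).sup Prod.fst := by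
  rw [show nfEval e s ≤ nfEval e t ↔
      ∀ p ∈ s, e p.1 ⊓ (e p.2)ᶜ ≤ nfEval e t from Finset.sup_le_iff]
  exact forall₂_congr fun p _ => single_le he hinf hsup p.1 p.2 t

end Emb

section Hom
variable (hinf : ∀ x y, e (x ⊓ y) = e x ⊓ e y) (hsup : ∀ x y, e (x ⊔ y) = e x ⊔ e y)
  (hbot : e ⊥ = ⊥) (htop : e ⊤ = ⊤)

lemma nfEval_empty : nfEval e (∅ : Finset (L × L)) = ⊥ := Finset.sup_empty

include hbot in
lemma nfEval_single (x : L) : nfEval e {(x, ⊥)} = e x := by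
  simp [nfEval, hbot]

include hbot htop in
lemma nfEval_topnf : nfEval e {((⊤ : L), (⊥ : L))} = ⊤ := by
  simp [nfEval, hbot, htop]

lemma nfEval_union [DecidableEq (L × L)] (s t : Finset (L × L)) :
    nfEval e (s ∪ t) = nfEval e s ⊔ nfEval e t := Finset.sup_union

/-- Normal form for the meet. -/
def nfMul [DecidableEq (L × L)] (s t : Finset (L × L)) : Finset (L × L) :=
  (s ×ˢ t).image fun pq => (pq.1.1 ⊓ pq.2.1, pq.1.2 ⊔ pq.2.2)

include hinf hsup in
lemma nfEval_mul [DecidableEq (L × L)] (s t : Finset (L × L)) :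
    nfEval e (nfMul s t) = nfEval e s ⊓ nfEval e t := by
  rw [nfMul, nfEval, Finset.sup_image]
  rw [show nfEval e s ⊓ nfEval e t
      = s.sup fun p => (e p.1 ⊓ (e p.2)ᶜ) ⊓ nfEval e t from
    Finset.sup_inf_distrib_right _ _ _]
  rw [Finset.sup_product_left]
  refine Finset.sup_congr rfl fun p _ => ?_
  rw [show (e p.1 ⊓ (e p.2)ᶜ) ⊓ nfEval e t
      = t.sup fun q => (e p.1 ⊓ (e p.2)ᶜ) ⊓ (e q.1 ⊓ (e q.2)ᶜ) from
    Finset.sup_inf_distrib_left _ _ _]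
  refine Finset.sup_congr rfl fun q _ => ?_
  simp only [Function.comp_apply, hinf, hsup, compl_sup]
  rw [inf_inf_inf_comm]

include hinf hsup hbot htop in
lemma nfEval_compl_ex [DecidableEq (L × L)] (s : Finset (L × L)) :
    ∃ r : Finset (L × L), nfEval e r = (nfEval e s)ᶜ := by
  induction s using Finset.induction with
  | empty =>
    exact ⟨{((⊤ : L), (⊥ : L))}, by rw [nfEval_topnf hbot htop, nfEval_empty, compl_bot]⟩
  | @insert p t hp ih =>
    obtain ⟨r, hr⟩ := ih
    refine ⟨nfMul {((⊤ : L), p.1), (p.2, (⊥ : L))} r, ?_⟩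
    rw [nfEval_mul hinf hsup, hr]
    have h1 : nfEval e (insert p t) = (e p.1 ⊓ (e p.2)ᶜ) ⊔ nfEval e t := Finset.sup_insert
    rw [h1, compl_sup, compl_inf, compl_compl]
    congr 1
    simp [nfEval, hbot, htop]

include hinf hsup hbot htop in
lemma nf_surj [DecidableEq (L × L)] (b : B) (hb : BoolGen (Set.range e) b) :
    ∃ s : Finset (L × L), nfEval e s = b := by
  induction hb with
  | base x hx =>
    obtain ⟨y, hy⟩ := hx
    exact ⟨{(y, ⊥)}, by rw [nfEval_single hbot, hy]⟩
  | bot => exact ⟨∅, nfEval_empty⟩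
  | top => exact ⟨{((⊤ : L), (⊥ : L))}, nfEval_topnf hbot htop⟩
  | inf x y _ _ ihx ihy =>
    obtain ⟨s, hs⟩ := ihx; obtain ⟨t, ht⟩ := ihy
    exact ⟨nfMul s t, by rw [nfEval_mul hinf hsup, hs, ht]⟩
  | sup x y _ _ ihx ihy =>
    obtain ⟨s, hs⟩ := ihx; obtain ⟨t, ht⟩ := ihy
    exact ⟨s ∪ t, by rw [nfEval_union, hs, ht]⟩
  | compl x _ ihx =>
    obtain ⟨s, hs⟩ := ihx
    obtain ⟨r, hr⟩ := nfEval_compl_ex hinf hsup hbot htop s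
    exact ⟨r, by rw [hr, hs]⟩

end Hom
end FBEU

/-- Uniqueness of the free Boolean extension: two Boolean algebras generated by embedded
copies of a bounded distributive lattice `L` are isomorphic over `L`. -/
theorem free_boolean_extension_unique {L B₁ B₂ : Type*}
    [DistribLattice L] [BoundedOrder L] [BooleanAlgebra B₁] [BooleanAlgebra B₂]
    (e₁ : L → B₁) (e₂ : L → B₂)
    (he₁ : Function.Injective e₁) (he₂ : Function.Injective e₂)
    (h₁inf : ∀ x y : L, e₁ (x ⊓ y) = e₁ x ⊓ e₁ y)
    (h₁sup : ∀ x y : L, e₁ (x ⊔ y) = e₁ x ⊔ e₁ y)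
    (h₁bot : e₁ ⊥ = ⊥) (h₁top : e₁ ⊤ = ⊤)
    (h₂inf : ∀ x y : L, e₂ (x ⊓ y) = e₂ x ⊓ e₂ y)
    (h₂sup : ∀ x y : L, e₂ (x ⊔ y) = e₂ x ⊔ e₂ y)
    (h₂bot : e₂ ⊥ = ⊥) (h₂top : e₂ ⊤ = ⊤)
    (hgen₁ : ∀ b : B₁, BoolGen (Set.range e₁) b)
    (hgen₂ : ∀ b : B₂, BoolGen (Set.range e₂) b) :
    ∃ φ : B₁ ≃ B₂, (∀ x y : B₁, φ (x ⊓ y) = φ x ⊓ φ y) ∧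
      (∀ x y : B₁, φ (x ⊔ y) = φ x ⊔ φ y) ∧ φ ⊥ = ⊥ ∧ φ ⊤ = ⊤ ∧
      (∀ x : B₁, φ xᶜ = (φ x)ᶜ) ∧ ∀ x : L, φ (e₁ x) = e₂ x := by
  classical
  have surj₁ : ∀ b : B₁, ∃ s : Finset (L × L), FBEU.nfEval e₁ s = b :=
    fun b => FBEU.nf_surj h₁inf h₁sup h₁bot h₁top b (hgen₁ b)
  have surj₂ : ∀ b : B₂, ∃ s : Finset (L × L), FBEU.nfEval e₂ s = b :=
    fun b => FBEU.nf_surj h₂inf h₂sup h₂bot h₂top b (hgen₂ b)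
  have key₁₂ : ∀ s t : Finset (L × L),
      FBEU.nfEval e₁ s ≤ FBEU.nfEval e₁ t → FBEU.nfEval e₂ s ≤ FBEU.nfEval e₂ t :=
    fun s t h => (FBEU.nfEval_le_iff he₂ h₂inf h₂sup s t).mpr
      ((FBEU.nfEval_le_iff he₁ h₁inf h₁sup s t).mp h)
  have key₂₁ : ∀ s t : Finset (L × L),
      FBEU.nfEval e₂ s ≤ FBEU.nfEval e₂ t → FBEU.nfEval e₁ s ≤ FBEU.nfEval e₁ t :=
    fun s t h => (FBEU.nfEval_le_iff he₁ h₁inf h₁sup s t).mpr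
      ((FBEU.nfEval_le_iff he₂ h₂inf h₂sup s t).mp h)
  have key : ∀ s t : Finset (L × L),
      FBEU.nfEval e₁ s = FBEU.nfEval e₁ t → FBEU.nfEval e₂ s = FBEU.nfEval e₂ t :=
    fun s t h => le_antisymm (key₁₂ _ _ h.le) (key₁₂ _ _ h.ge)
  have key' : ∀ s t : Finset (L × L),
      FBEU.nfEval e₂ s = FBEU.nfEval e₂ t → FBEU.nfEval e₁ s = FBEU.nfEval e₁ t :=
    fun s t h => le_antisymm (key₂₁ _ _ h.le) (key₂₁ _ _ h.ge)
  let F : B₁ → B₂ := fun b => FBEU.nfEval e₂ (surj₁ b).choose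
  let G : B₂ → B₁ := fun b => FBEU.nfEval e₁ (surj₂ b).choose
  have hF : ∀ s : Finset (L × L), F (FBEU.nfEval e₁ s) = FBEU.nfEval e₂ s :=
    fun s => key _ _ ((surj₁ (FBEU.nfEval e₁ s)).choose_spec)
  have hG : ∀ s : Finset (L × L), G (FBEU.nfEval e₂ s) = FBEU.nfEval e₁ s :=
    fun s => key' _ _ ((surj₂ (FBEU.nfEval e₂ s)).choose_spec)
  have hGF : Function.LeftInverse G F := by
    intro b
    obtain ⟨s, hs⟩ := surj₁ b
    rw [← hs, hF, hG]
  have hFG : Function.RightInverse G F := by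
    intro b
    obtain ⟨s, hs⟩ := surj₂ b
    rw [← hs, hG, hF]
  have hFinf : ∀ x y : B₁, F (x ⊓ y) = F x ⊓ F y := by
    intro x y
    obtain ⟨s, hs⟩ := surj₁ x
    obtain ⟨t, ht⟩ := surj₁ y
    calc F (x ⊓ y) = F (FBEU.nfEval e₁ (FBEU.nfMul s t)) := by
          rw [FBEU.nfEval_mul h₁inf h₁sup, hs, ht]
      _ = FBEU.nfEval e₂ (FBEU.nfMul s t) := hF _
      _ = FBEU.nfEval e₂ s ⊓ FBEU.nfEval e₂ t := FBEU.nfEval_mul h₂inf h₂sup s t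
      _ = F x ⊓ F y := by rw [← hs, ← ht, hF, hF]
  have hFsup : ∀ x y : B₁, F (x ⊔ y) = F x ⊔ F y := by
    intro x y
    obtain ⟨s, hs⟩ := surj₁ x
    obtain ⟨t, ht⟩ := surj₁ y
    calc F (x ⊔ y) = F (FBEU.nfEval e₁ (s ∪ t)) := by
          rw [FBEU.nfEval_union, hs, ht]
      _ = FBEU.nfEval e₂ (s ∪ t) := hF _
      _ = FBEU.nfEval e₂ s ⊔ FBEU.nfEval e₂ t := FBEU.nfEval_union s t
      _ = F x ⊔ F y := by rw [← hs, ← ht, hF, hF]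
  have hFbot : F ⊥ = ⊥ := by
    have := hF (∅ : Finset (L × L))
    rwa [FBEU.nfEval_empty, FBEU.nfEval_empty] at this
  have hFtop : F ⊤ = ⊤ := by
    have := hF ({((⊤ : L), (⊥ : L))} : Finset (L × L))
    rwa [FBEU.nfEval_topnf h₁bot h₁top, FBEU.nfEval_topnf h₂bot h₂top] at this
  have hFcompl : ∀ x : B₁, F xᶜ = (F x)ᶜ := by
    intro x
    have h1 : F x ⊓ F xᶜ = ⊥ := by rw [← hFinf, inf_compl_eq_bot, hFbot]
    have h2 : F x ⊔ F xᶜ = ⊤ := by rw [← hFsup, sup_compl_eq_top, hFtop]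
    exact (IsCompl.compl_eq ⟨disjoint_iff.mpr h1, codisjoint_iff.mpr h2⟩).symm
  have hFe : ∀ x : L, F (e₁ x) = e₂ x := by
    intro x
    have := hF ({(x, (⊥ : L))} : Finset (L × L))
    rwa [FBEU.nfEval_single h₁bot, FBEU.nfEval_single h₂bot] at this
  exact ⟨⟨F, G, hGF, hFG⟩, hFinf, hFsup, hFbot, hFtop, hFcompl, hFe⟩
end

section
/- For every bounded distributive lattice L there exist a Boolean algebra B and an injective bounded lattice homomorphism e : L → B whose image generates B as a Boolean algebra. (Existence of the free Boolean extension Fr(L) of a bounded distributive lattice.) -/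
open Order Function

namespace BoolGen

variable {B : Type*} [BooleanAlgebra B]

theorem mono {S T : Set B} (hST : S ⊆ T) {x : B} (hx : BoolGen S x) : BoolGen T x := by
  induction hx with
  | base x hx => exact .base x (hST hx)
  | bot => exact .bot
  | top => exact .top
  | inf x y _ _ ihx ihy => exact .inf x y ihx ihy
  | sup x y _ _ ihx ihy => exact .sup x y ihx ihy
  | compl x _ ihx => exact .compl x ihx

def subalgebra (S : Set B) : BooleanSubalgebra B where
  carrier := {x | BoolGen S x}
  supClosed' _ hx _ hy := .sup _ _ hx hy
  infClosed' _ hx _ hy := .inf _ _ hx hy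
  compl_mem' hx := .compl _ hx
  bot_mem' := .bot

theorem of_subalgebra {S : Set B} (x : subalgebra S) :
    BoolGen {y : subalgebra S | (y : B) ∈ S} x := by
  obtain ⟨x, hx⟩ := x
  induction hx with
  | base x hx => exact .base _ hx
  | bot => exact .bot
  | top => exact .top
  | inf x y hx hy ihx ihy => exact .inf (⟨x, hx⟩ : subalgebra S) ⟨y, hy⟩ ihx ihy
  | sup x y hx hy ihx ihy => exact .sup (⟨x, hx⟩ : subalgebra S) ⟨y, hy⟩ ihx ihy
  | compl x hx ihx => exact .compl (⟨x, hx⟩ : subalgebra S) ihx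

end BoolGen

namespace BoundedLatticeHom

variable {L B : Type*} [Lattice L] [BoundedOrder L] [BooleanAlgebra B]

def rangeBoolGen (f : BoundedLatticeHom L B) :
    BoundedLatticeHom L (BoolGen.subalgebra (Set.range f)) where
  toFun a := ⟨f a, .base _ ⟨a, rfl⟩⟩
  map_sup' a b := Subtype.ext (map_sup f a b)
  map_inf' a b := Subtype.ext (map_inf f a b)
  map_top' := Subtype.ext (map_top f)
  map_bot' := Subtype.ext (map_bot f)

theorem rangeBoolGen_injective {f : BoundedLatticeHom L B} (hf : Injective f) :
    Injective f.rangeBoolGen :=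
  fun _ _ h => hf (congrArg Subtype.val h)

theorem boolGen_range_rangeBoolGen (f : BoundedLatticeHom L B)
    (b : BoolGen.subalgebra (Set.range f)) : BoolGen (Set.range f.rangeBoolGen) b :=
  (BoolGen.of_subalgebra b).mono <| by rintro _ ⟨a, ha⟩; exact ⟨a, Subtype.ext ha⟩

end BoundedLatticeHom

namespace Order.Ideal

theorem IsPrime.inf_mem_iff {P : Type*} [SemilatticeInf P] {I : Ideal P} (hI : I.IsPrime)
    {x y : P} : x ⊓ y ∈ I ↔ x ∈ I ∨ y ∈ I :=
  ⟨hI.mem_or_mem, fun h => h.elim (I.lower inf_le_left) (I.lower inf_le_right)⟩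

theorem exists_isPrime_mem_notMem {L : Type*} [DistribLattice L] {a b : L} (hab : ¬a ≤ b) :
    ∃ I : Ideal L, I.IsPrime ∧ b ∈ I ∧ a ∉ I := by
  have hdisj : Disjoint (PFilter.principal a : Set L) (principal b : Set L) :=
    Set.disjoint_left.2 fun _ hxa hxb => hab ((PFilter.mem_principal.1 hxa).trans hxb)
  obtain ⟨I, hI, hbI, hdisjI⟩ := DistribLattice.prime_ideal_of_disjoint_filter_ideal hdisj
  exact ⟨I, hI, hbI (mem_principal.2 le_rfl),
    Set.disjoint_left.1 hdisjI (PFilter.mem_principal.2 le_rfl)⟩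

end Order.Ideal

namespace DistribLattice

variable {L : Type*} [DistribLattice L] [BoundedOrder L]

def stoneRepresentation : BoundedLatticeHom L (Set {I : Ideal L // I.IsPrime}) where
  toFun a := {I | a ∉ I.1}
  map_sup' a b := by ext I; simp [Ideal.sup_mem_iff, -not_and, not_and_or]
  map_inf' a b := by ext I; simp [I.2.inf_mem_iff, not_or]
  map_top' := by ext I; simp [I.2.toIsProper.top_notMem]
  map_bot' := by ext I; simp

theorem le_of_stoneRepresentation_subset {a b : L}
    (h : stoneRepresentation a ⊆ stoneRepresentation b) : a ≤ b := by
  by_contra hab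
  obtain ⟨I, hI, hbI, haI⟩ := Ideal.exists_isPrime_mem_notMem hab
  exact h (show ⟨I, hI⟩ ∈ stoneRepresentation a from haI) hbI

theorem stoneRepresentation_injective : Injective (stoneRepresentation (L := L)) :=
  fun _ _ h => le_antisymm (le_of_stoneRepresentation_subset h.le)
    (le_of_stoneRepresentation_subset h.ge)

end DistribLattice

/-- Existence of the free Boolean extension of a bounded distributive lattice. -/
theorem free_boolean_extension_exists {L : Type u} [DistribLattice L] [BoundedOrder L] :
    ∃ (B : Type u) (_ : BooleanAlgebra B) (e : L → B),
      Function.Injective e ∧ (∀ x y : L, e (x ⊓ y) = e x ⊓ e y) ∧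
      (∀ x y : L, e (x ⊔ y) = e x ⊔ e y) ∧ e ⊥ = ⊥ ∧ e ⊤ = ⊤ ∧
      ∀ b : B, BoolGen (Set.range e) b := by
  let f := DistribLattice.stoneRepresentation (L := L)
  exact ⟨_, inferInstance, f.rangeBoolGen,
    BoundedLatticeHom.rangeBoolGen_injective DistribLattice.stoneRepresentation_injective,
    map_inf _, map_sup _, map_bot _, map_top _, f.boolGen_range_rangeBoolGen⟩
end

section
/- Let (A, g_A) be an interior algebra which is a *-algebra (the Boolean subalgebra of A generated by the open elements of A is all of A), and let (B, g_B) be an interior algebra. Let h₀ be a function from the open elements of A to B such that h₀ ⊥ = ⊥, h₀ ⊤ = ⊤, h₀ a is open in B for every open a, h₀ (a ⊓ b) = h₀ a ⊓ h₀ b, h₀ (a ⊔ b) = h₀ a ⊔ h₀ b, and h₀ (g_A (aᶜ ⊔ b)) = g_B ((h₀ a)ᶜ ⊔ h₀ b) for all open a, b of A (i.e., h₀ is a Heyting algebra homomorphism between the Heyting algebras of open elements). Then there exists a unique homomorphism of interior algebras h : A → B with h a = h₀ a for every open element a of A. (Blok's Theorem I.2.15, specialized to *-algebras.) -/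
/-!
The open elements form a bounded sublattice `S` of `A` which generates `A`, so every element of
`A` is a finite join `⨆ aᵢ \ bᵢ` with `aᵢ, bᵢ ∈ S`, and the extension must send it to
`⨆ h₀ aᵢ \ h₀ bᵢ`. This is well defined because an inequality `a \ b ≤ ⨆ cᵢ \ dᵢ` splits, one
term at a time, into inequalities `(a ⊓ d) \ b ≤ …` and `a \ (b ⊔ c) ≤ …` between elements of the
same shape, down to `a ≤ b` inside `S`, which a lattice homomorphism on `S` preserves.
Dually every element is a finite meet `⨅ aᵢᶜ ⊔ bᵢ`; interior operators and Boolean homomorphisms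
preserve finite meets, and on each `aᵢᶜ ⊔ bᵢ` the extension commutes with the interior operators
exactly because `h₀` preserves the Heyting implication `aᵢ ⇒ bᵢ = gA (aᵢᶜ ⊔ bᵢ)`.
-/

open BooleanSubalgebra (closure mem_closure_iff_sup_sdiff)

section BooleanAlgebra

variable {α : Type*} [BooleanAlgebra α]

theorem sdiff_le_sdiff_sup_iff {a b c d t : α} :
    a \ b ≤ c \ d ⊔ t ↔ (a ⊓ d) \ b ≤ t ∧ a \ (b ⊔ c) ≤ t := by
  rw [← sdiff_le_iff, sdiff_sdiff_right', sdiff_sdiff_left, sup_le_iff, and_comm,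
    sdiff_inf_right_comm]

theorem sdiff_inf_sdiff_eq (a b c d : α) : a \ b ⊓ c \ d = (a ⊓ c) \ (b ⊔ d) := by
  simp only [sdiff_eq, compl_sup]
  ac_rfl

theorem BoolGen.mem_closure {S : Set α} {x : α} (hx : BoolGen S x) : x ∈ closure S := by
  induction hx with
  | base x hx => exact BooleanSubalgebra.subset_closure hx
  | bot => exact BooleanSubalgebra.bot_mem
  | top => exact BooleanSubalgebra.top_mem
  | inf _ _ _ _ ihx ihy => exact BooleanSubalgebra.inf_mem ihx ihy
  | sup _ _ _ _ ihx ihy => exact BooleanSubalgebra.sup_mem ihx ihy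
  | compl _ _ ih => exact BooleanSubalgebra.compl_mem ih

namespace IsInteriorOp

variable {g : α → α}

def toInfTopHom (hg : IsInteriorOp g) : InfTopHom α α := ⟨⟨g, hg.2.2.1⟩, hg.2.2.2⟩

theorem map_bot (hg : IsInteriorOp g) : g ⊥ = ⊥ := le_bot_iff.1 (hg.1 ⊥)

theorem isSublattice_fixedPoints (hg : IsInteriorOp g) :
    IsSublattice (Function.fixedPoints g) where
  supClosed _ ha _ hb := le_antisymm (hg.1 _) <| sup_le
    (ha.symm.trans_le (OrderHomClass.mono hg.toInfTopHom le_sup_left))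
    (hb.symm.trans_le (OrderHomClass.mono hg.toInfTopHom le_sup_right))
  infClosed a ha b hb := (hg.2.2.1 a b).trans (congrArg₂ _ ha hb)

end IsInteriorOp

end BooleanAlgebra

section Extension

variable {A C : Type*} [BooleanAlgebra C] {S : Set A}

def supSdiff (f : A → C) (t : Finset (S × S)) : C := t.sup fun p => f p.1 \ f p.2

theorem supSdiff_union [DecidableEq (S × S)] (f : A → C) (t u : Finset (S × S)) :
    supSdiff f (t ∪ u) = supSdiff f t ⊔ supSdiff f u :=
  Finset.sup_union

variable [BooleanAlgebra A]

structure IsLatticeHomOn (f : A → C) (S : Set A) : Prop where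
  map_inf : ∀ a ∈ S, ∀ b ∈ S, f (a ⊓ b) = f a ⊓ f b
  map_sup : ∀ a ∈ S, ∀ b ∈ S, f (a ⊔ b) = f a ⊔ f b

theorem isLatticeHomOn_id : IsLatticeHomOn (id : A → A) S :=
  ⟨fun _ _ _ _ => rfl, fun _ _ _ _ => rfl⟩

theorem IsLatticeHomOn.map_le {f : A → C} (hf : IsLatticeHomOn f S) {a b : A} (ha : a ∈ S)
    (hb : b ∈ S) (hab : a ≤ b) : f a ≤ f b := by
  rw [← inf_eq_left.2 hab, hf.map_inf a ha b hb]
  exact inf_le_right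

def IsSublattice.sdiffMeet (hS : IsSublattice S) (pq : (S × S) × (S × S)) : S × S :=
  (⟨pq.1.1 ⊓ pq.2.1, hS.infClosed pq.1.1.2 pq.2.1.2⟩,
    ⟨pq.1.2 ⊔ pq.2.2, hS.supClosed pq.1.2.2 pq.2.2.2⟩)

theorem supSdiff_image_sdiffMeet [DecidableEq (S × S)] (hS : IsSublattice S) {f : A → C}
    (hf : IsLatticeHomOn f S) (t u : Finset (S × S)) :
    supSdiff f ((t ×ˢ u).image hS.sdiffMeet) = supSdiff f t ⊓ supSdiff f u := by
  rw [supSdiff, supSdiff, supSdiff, Finset.sup_image, Finset.sup_inf_sup]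
  refine Finset.sup_congr rfl fun pq _ => ?_
  simp only [Function.comp_apply, IsSublattice.sdiffMeet, sdiff_inf_sdiff_eq,
    hf.map_inf _ pq.1.1.2 _ pq.2.1.2, hf.map_sup _ pq.1.2.2 _ pq.2.2.2]

theorem sdiff_le_supSdiff (hS : IsSublattice S) {f : A → C} (hf : IsLatticeHomOn f S)
    {a b : A} (ha : a ∈ S) (hb : b ∈ S) {t : Finset (S × S)} (h : a \ b ≤ supSdiff id t) :
    f a \ f b ≤ supSdiff f t := by
  classical
  induction t using Finset.induction_on generalizing a b with
  | empty =>
    have hab : a ≤ b := sdiff_eq_bot_iff.1 (le_bot_iff.1 h)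
    exact (sdiff_eq_bot_iff.2 (hf.map_le ha hb hab)).le
  | insert p t _ ih =>
    rw [supSdiff, Finset.sup_insert] at h ⊢
    obtain ⟨hd, hc⟩ := sdiff_le_sdiff_sup_iff.1 h
    refine sdiff_le_sdiff_sup_iff.2 ⟨?_, ?_⟩
    · rw [← hf.map_inf _ ha _ p.2.2]
      exact ih (hS.infClosed ha p.2.2) hb hd
    · rw [← hf.map_sup _ hb _ p.1.2]
      exact ih ha (hS.supClosed hb p.1.2) hc

theorem supSdiff_mono (hS : IsSublattice S) {f : A → C} (hf : IsLatticeHomOn f S)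
    {t u : Finset (S × S)} (h : supSdiff id t ≤ supSdiff id u) : supSdiff f t ≤ supSdiff f u :=
  Finset.sup_le fun p hp => sdiff_le_supSdiff hS hf p.1.2 p.2.2 <| (Finset.le_sup hp).trans h

theorem exists_boundedLatticeHom_eqOn (hS : IsSublattice S) (hS_bot : ⊥ ∈ S) (hS_top : ⊤ ∈ S)
    (hgen : closure S = ⊤) {f : A → C} (hf : IsLatticeHomOn f S) (hf_bot : f ⊥ = ⊥)
    (hf_top : f ⊤ = ⊤) : ∃ h : BoundedLatticeHom A C, Set.EqOn h f S := by
  classical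
  have hrep (x : A) : ∃ t : Finset (S × S), x = supSdiff id t :=
    (mem_closure_iff_sup_sdiff hS hS_bot hS_top).1 (hgen ▸ BooleanSubalgebra.mem_top)
  choose t ht using hrep
  have hwd {x : A} {u : Finset (S × S)} (hu : x = supSdiff id u) :
      supSdiff f (t x) = supSdiff f u :=
    le_antisymm (supSdiff_mono hS hf ((ht x).symm.trans hu).le)
      (supSdiff_mono hS hf (hu.symm.trans (ht x)).le)
  have hsingle {a b : A} (ha : a ∈ S) (hb : b ∈ S) : supSdiff f (t (a \ b)) = f a \ f b :=
    (hwd (u := {(⟨a, ha⟩, ⟨b, hb⟩)}) (by simp [supSdiff])).trans (by simp [supSdiff])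
  refine ⟨{ toFun x := supSdiff f (t x)
            map_sup' x y := ?_
            map_inf' x y := ?_
            map_top' := ?_
            map_bot' := ?_ }, fun a ha => ?_⟩
  · rw [hwd (u := t x ∪ t y) (by rw [supSdiff_union, ← ht, ← ht]), supSdiff_union]
  · rw [hwd (u := (t x ×ˢ t y).image hS.sdiffMeet)
      (by rw [supSdiff_image_sdiffMeet hS isLatticeHomOn_id, ← ht, ← ht]),
      supSdiff_image_sdiffMeet hS hf]
  · simpa [hf_top, hf_bot] using hsingle hS_top hS_bot
  · simpa using hsingle hS_bot hS_bot
  · simpa [hf_bot] using hsingle ha hS_bot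

theorem BoundedLatticeHom.eqOn_closure {h h' : BoundedLatticeHom A C} (heq : Set.EqOn h h' S) :
    Set.EqOn h h' (closure S) := fun _ hx => by
  induction hx using BooleanSubalgebra.closure_bot_sup_induction with
  | mem x hx => exact heq hx
  | bot => simp
  | sup x _ y _ hx hy => simp [hx, hy]
  | compl x _ hx => simp [hx]

theorem InfTopHom.eqOn_closure (hS : IsSublattice S) (hS_bot : ⊥ ∈ S) (hS_top : ⊤ ∈ S)
    {φ ψ : InfTopHom A C} (heq : ∀ a ∈ S, ∀ b ∈ S, φ (aᶜ ⊔ b) = ψ (aᶜ ⊔ b)) :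
    Set.EqOn φ ψ (closure S) := by
  intro x hx
  obtain ⟨t, ht⟩ :=
    (mem_closure_iff_sup_sdiff hS hS_bot hS_top).1 (BooleanSubalgebra.compl_mem hx)
  have hx_inf : x = t.inf fun p => (p.1 : A)ᶜ ⊔ p.2 := by
    rw [← compl_compl x, ht, Finset.compl_sup]
    simp only [sdiff_eq, compl_inf, compl_compl]
  rw [hx_inf, map_finset_inf, map_finset_inf]
  exact Finset.inf_congr rfl fun p _ => heq _ p.1.2 _ p.2.2

end Extension

def IsIAHom.toBoundedLatticeHom {A B : Type*} [BooleanAlgebra A] [BooleanAlgebra B]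
    {gA : A → A} {gB : B → B} {h : A → B} (hh : IsIAHom gA gB h) : BoundedLatticeHom A B where
  toFun := h
  map_inf' := hh.1
  map_sup' := hh.2.1
  map_bot' := hh.2.2.2.1
  map_top' := hh.2.2.2.2.1

theorem star_algebra_hom_extension_general {A B : Type*} [BooleanAlgebra A] [BooleanAlgebra B]
    (gA : A → A) (gB : B → B) (hgA : IsInteriorOp gA) (hgB : IsInteriorOp gB)
    (hstar : ∀ x : A, BoolGen {y : A | gA y = y} x)
    (h₀ : A → B)
    (hbot : h₀ ⊥ = ⊥) (htop : h₀ ⊤ = ⊤)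
    (hinf : ∀ a b : A, gA a = a → gA b = b → h₀ (a ⊓ b) = h₀ a ⊓ h₀ b)
    (hsup : ∀ a b : A, gA a = a → gA b = b → h₀ (a ⊔ b) = h₀ a ⊔ h₀ b)
    (himp : ∀ a b : A, gA a = a → gA b = b →
      h₀ (gA (aᶜ ⊔ b)) = gB ((h₀ a)ᶜ ⊔ h₀ b)) :
    ∃! h : A → B, IsIAHom gA gB h ∧ ∀ a : A, gA a = a → h a = h₀ a := by
  set S := {y : A | gA y = y}
  have hS : IsSublattice S := hgA.isSublattice_fixedPoints
  have hmem (x : A) : x ∈ closure S := (hstar x).mem_closure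
  obtain ⟨h, hh₀⟩ := exists_boundedLatticeHom_eqOn hS hgA.map_bot hgA.2.2.2
    (eq_top_iff.2 fun x _ => hmem x) ⟨fun a ha b hb => hinf a b ha hb,
      fun a ha b hb => hsup a b ha hb⟩ hbot htop
  have hg : Set.EqOn ((h : InfTopHom A B).comp hgA.toInfTopHom) (hgB.toInfTopHom.comp h)
      (closure S) :=
    InfTopHom.eqOn_closure hS hgA.map_bot hgA.2.2.2 fun a ha b hb => by
      change h (gA (aᶜ ⊔ b)) = gB (h (aᶜ ⊔ b))
      rw [hh₀ (hgA.2.1 _), himp a b ha hb, map_sup, map_compl', hh₀ ha, hh₀ hb]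
  refine ⟨h, ⟨⟨map_inf h, map_sup h, map_compl' h, map_bot h, map_top h,
    fun x => hg (hmem x)⟩, fun a ha => hh₀ ha⟩, ?_⟩
  rintro h' ⟨hh', hh'₀⟩
  funext x
  exact BoundedLatticeHom.eqOn_closure (h := hh'.toBoundedLatticeHom)
    (fun a ha => (hh'₀ a ha).trans (hh₀ ha).symm) (hmem x)

/-- Blok's Theorem I.2.15 for `*`-algebras: a Heyting homomorphism between the Heyting
algebras of open elements extends to a unique homomorphism of interior algebras. -/
theorem star_algebra_hom_extension {A B : Type*} [BooleanAlgebra A] [BooleanAlgebra B]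
    (gA : A → A) (gB : B → B) (hgA : IsInteriorOp gA) (hgB : IsInteriorOp gB)
    (hstar : ∀ x : A, BoolGen {y : A | gA y = y} x)
    (h₀ : A → B)
    (hbot : h₀ ⊥ = ⊥) (htop : h₀ ⊤ = ⊤)
    (hopen : ∀ a : A, gA a = a → gB (h₀ a) = h₀ a)
    (hinf : ∀ a b : A, gA a = a → gA b = b → h₀ (a ⊓ b) = h₀ a ⊓ h₀ b)
    (hsup : ∀ a b : A, gA a = a → gA b = b → h₀ (a ⊔ b) = h₀ a ⊔ h₀ b)
    (himp : ∀ a b : A, gA a = a → gA b = b →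
      h₀ (gA (aᶜ ⊔ b)) = gB ((h₀ a)ᶜ ⊔ h₀ b)) :
    ∃! h : A → B, IsIAHom gA gB h ∧ ∀ a : A, gA a = a → h a = h₀ a :=
  star_algebra_hom_extension_general gA gB hgA hgB hstar h₀ hbot htop hinf hsup himp
end
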